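/- For every κ ∈ (0,1), E(κ)² - (1-κ²)K(κ)² > 0, where K and E are the complete elliptic integrals of the first and second kind. -/

import Mathlib

/-!
Write `k' = √(1 - κ²)` and `Δ(θ) = √(1 - κ² sin² θ)`, so that `E - k'K = ∫₀^{π/2} (Δ - k'/Δ)`.
The integrand is negative near `π/2`, but pairing `θ` with `π/2 - θ` helps:
`Δ(θ) Δ(π/2 - θ)` squared is `1 - κ² + κ⁴ sin² θ cos² θ > k'²`, and for `a, b > 0` with `ab > k'`
one has `(a - k'/a) + (b - k'/b) = (a + b)(ab - k')/(ab) > 0`. Hence `E > k'K ≥ 0`, and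
`E² - k'²K² = (E - k'K)(E + k'K) > 0`.
-/

open Real

/-- Complete elliptic integral of the first kind. -/
noncomputable def ellipticK (k : ℝ) : ℝ :=
  ∫ θ in (0:ℝ)..(π/2), 1 / Real.sqrt (1 - k^2 * (Real.sin θ)^2)

/-- Complete elliptic integral of the second kind. -/
noncomputable def ellipticE (k : ℝ) : ℝ :=
  ∫ θ in (0:ℝ)..(π/2), Real.sqrt (1 - k^2 * (Real.sin θ)^2)

open intervalIntegral

theorem integral_pos_of_add_comp_sub_pos {g : ℝ → ℝ} {a : ℝ}
    (hg : IntervalIntegrable g MeasureTheory.volume 0 a) (ha : 0 < a)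
    (h : ∀ θ ∈ Set.Ioo 0 a, 0 < g θ + g (a - θ)) : 0 < ∫ θ in (0:ℝ)..a, g θ := by
  have hg' : IntervalIntegrable (fun θ => g (a - θ)) MeasureTheory.volume 0 a := by
    simpa using (hg.comp_sub_left a).symm
  have hreflect : ∫ θ in (0:ℝ)..a, g (a - θ) = ∫ θ in (0:ℝ)..a, g θ := by
    simp [integral_comp_sub_left]
  have hsum := intervalIntegral_pos_of_pos_on (hg.add hg') h ha
  rw [integral_add hg hg', hreflect] at hsum
  linarith

theorem add_sub_div_add_sub_div_pos {a b c : ℝ} (ha : 0 < a) (hb : 0 < b) (hc : c < a * b) :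
    0 < a - c / a + (b - c / b) := by
  have hab : 0 < a * b := mul_pos ha hb
  have hsplit : a - c / a + (b - c / b) = (a + b) * (a * b - c) / (a * b) := by
    field_simp
    ring
  rw [hsplit]
  exact div_pos (mul_pos (add_pos ha hb) (sub_pos.2 hc)) hab

section

variable {k : ℝ}

theorem one_sub_sq_mul_sin_sq_pos (hk : k ^ 2 < 1) (θ : ℝ) : 0 < 1 - k ^ 2 * sin θ ^ 2 := by
  nlinarith [sin_sq_le_one θ, sq_nonneg k]

theorem sqrt_one_sub_sq_lt_sqrt_mul_sqrt (hk0 : k ≠ 0) (hk1 : k ^ 2 < 1) {θ : ℝ}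
    (hθ : θ ∈ Set.Ioo 0 (π / 2)) :
    √(1 - k ^ 2) < √(1 - k ^ 2 * sin θ ^ 2) * √(1 - k ^ 2 * cos θ ^ 2) := by
  have hsin : 0 < sin θ := sin_pos_of_pos_of_lt_pi hθ.1 (by linarith [pi_pos, hθ.2])
  have hcos : 0 < cos θ := cos_pos_of_mem_Ioo ⟨by linarith [pi_pos, hθ.1], hθ.2⟩
  have hprod : (1 - k ^ 2 * sin θ ^ 2) * (1 - k ^ 2 * cos θ ^ 2)
      = 1 - k ^ 2 + k ^ 4 * (sin θ * cos θ) ^ 2 := by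
    linear_combination (-k ^ 2) * sin_sq_add_cos_sq θ
  rw [← sqrt_mul (one_sub_sq_mul_sin_sq_pos hk1 θ).le, hprod]
  apply sqrt_lt_sqrt (by linarith)
  have : 0 < k ^ 4 * (sin θ * cos θ) ^ 2 := by positivity
  linarith

theorem ellipticK_nonneg (k : ℝ) : 0 ≤ ellipticK k :=
  integral_nonneg (by positivity) fun _ _ => by positivity

theorem sqrt_one_sub_sq_mul_ellipticK_lt_ellipticE (hk0 : k ≠ 0) (hk1 : k ^ 2 < 1) :
    √(1 - k ^ 2) * ellipticK k < ellipticE k := by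
  set Δ : ℝ → ℝ := fun θ => √(1 - k ^ 2 * sin θ ^ 2) with hΔ
  have hΔpos : ∀ θ, 0 < Δ θ := fun θ => sqrt_pos.2 (one_sub_sq_mul_sin_sq_pos hk1 θ)
  have hΔcont : Continuous Δ := by fun_prop
  have hinvcont : Continuous fun θ => √(1 - k ^ 2) / Δ θ :=
    continuous_const.div hΔcont fun θ => (hΔpos θ).ne'
  have hdiff : ellipticE k - √(1 - k ^ 2) * ellipticK k
      = ∫ θ in (0:ℝ)..(π / 2), (Δ θ - √(1 - k ^ 2) / Δ θ) := by
    rw [integral_sub (hΔcont.intervalIntegrable _ _) (hinvcont.intervalIntegrable _ _),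
      ellipticK, ← integral_const_mul]
    simp only [ellipticE, hΔ, mul_one_div]
  suffices 0 < ∫ θ in (0:ℝ)..(π / 2), (Δ θ - √(1 - k ^ 2) / Δ θ) by linarith
  refine integral_pos_of_add_comp_sub_pos ((hΔcont.sub hinvcont).intervalIntegrable _ _)
    (by positivity) fun θ hθ => ?_
  have hpair := sqrt_one_sub_sq_lt_sqrt_mul_sqrt hk0 hk1 hθ
  rw [← sin_pi_div_two_sub] at hpair
  exact add_sub_div_add_sub_div_pos (hΔpos θ) (hΔpos _) hpair

end

/-- For every `κ ∈ (0,1)`, `E(κ)² - (1-κ²)K(κ)² > 0`. -/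
theorem ellipticE_sq_sub_gt (κ : ℝ) (hκ : κ ∈ Set.Ioo (0:ℝ) 1) :
    (ellipticE κ)^2 - (1 - κ^2) * (ellipticK κ)^2 > 0 := by
  have hκ1 : κ ^ 2 < 1 := by nlinarith [hκ.1, hκ.2]
  have hlt := sqrt_one_sub_sq_mul_ellipticK_lt_ellipticE hκ.1.ne' hκ1
  have hfactor : (ellipticE κ)^2 - (1 - κ^2) * (ellipticK κ)^2
      = (ellipticE κ - √(1 - κ ^ 2) * ellipticK κ)
        * (ellipticE κ + √(1 - κ ^ 2) * ellipticK κ) := by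
    linear_combination (ellipticK κ) ^ 2 * sq_sqrt (sub_nonneg.2 hκ1.le)
  have hnonneg : 0 ≤ √(1 - κ ^ 2) * ellipticK κ := mul_nonneg (sqrt_nonneg _) (ellipticK_nonneg κ)
  rw [hfactor, gt_iff_lt]
  exact mul_pos (sub_pos.2 hlt) (by linarith)
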